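/- arXiv:1911.05127 — 2 statements merged into one kernel-verified Lean document; each statement's English description precedes it below -/
import Mathlib

section
/- Consensus error recursion: under the same algorithm, ‖x_{t+1} - 1 ⊗ x̄_{t+1}‖ ≤ σ_W ‖x_t - 1 ⊗ x̄_t‖ + σ_W ‖y_t - 1 ⊗ ȳ_t‖, where σ_W = ‖W - (1/n)11ᵀ‖ < 1. -/
/-!
Double stochasticity of `W` gives two facts. Column sums one make the average of
`x_{t+1}` equal to the average of `A (x_t - y_t)`, so the deviation of `x_{t+1}` from its
average is `(W - J/n) ⊗ A` applied to `x_t - y_t`. Row sums one make `W - J/n` have zero row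
sums, so it kills constant block vectors and `x_t - y_t` may be replaced by the deviation
`(x_t - 1 ⊗ x̄_t) - (y_t - 1 ⊗ ȳ_t)`. The norm of `M ⊗ A` on `ℓ²` of blocks is at most
`‖M‖ ‖A‖` (apply `M` to each coordinate slice), and the triangle inequality finishes.
-/

open scoped BigOperators Matrix

noncomputable section

section BlockNorms

variable {ι κ 𝕜 : Type*} [Fintype ι]

theorem PiLp.norm_toLp_map_le [NontriviallyNormedField 𝕜] {E F : Type*}
    [SeminormedAddCommGroup E] [NormedSpace 𝕜 E] [SeminormedAddCommGroup F] [NormedSpace 𝕜 F]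
    (T : E →L[𝕜] F) (u : PiLp 2 (fun _ : ι => E)) :
    ‖WithLp.toLp 2 (fun j => T (u j))‖ ≤ ‖T‖ * ‖u‖ := by
  rw [← sq_le_sq₀ (norm_nonneg _) (by positivity), mul_pow, PiLp.norm_sq_eq_of_L2,
    PiLp.norm_sq_eq_of_L2, Finset.mul_sum]
  refine Finset.sum_le_sum fun j _ => ?_
  rw [← mul_pow]
  exact pow_le_pow_left₀ (norm_nonneg _) (T.le_opNorm _) 2

variable [RCLike 𝕜] [Fintype κ] [DecidableEq ι]

theorem Matrix.norm_toLp_sum_smul_le (M : Matrix ι ι 𝕜)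
    (v : PiLp 2 (fun _ : ι => EuclideanSpace 𝕜 κ)) :
    ‖WithLp.toLp 2 (fun i => ∑ j, M i j • v j)‖ ≤ ‖Matrix.toEuclideanCLM (𝕜 := 𝕜) M‖ * ‖v‖ := by
  let column (k : κ) : EuclideanSpace 𝕜 ι := WithLp.toLp 2 fun j => v j k
  have hcolumn (k : κ) (i : ι) :
      (∑ j, M i j • v j) k = Matrix.toEuclideanCLM (𝕜 := 𝕜) M (column k) i := by
    simp [column, Matrix.mulVec, dotProduct]
  set C := ‖Matrix.toEuclideanCLM (𝕜 := 𝕜) M‖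
  rw [← sq_le_sq₀ (norm_nonneg _) (by positivity), mul_pow]
  calc ‖WithLp.toLp 2 (fun i => ∑ j, M i j • v j)‖ ^ 2
      = ∑ k, ‖Matrix.toEuclideanCLM (𝕜 := 𝕜) M (column k)‖ ^ 2 := by
        simp only [PiLp.norm_sq_eq_of_L2, hcolumn]
        exact Finset.sum_comm
    _ ≤ ∑ k, C ^ 2 * ‖column k‖ ^ 2 := by
        gcongr with k
        rw [← mul_pow]
        exact pow_le_pow_left₀ (norm_nonneg _)
          ((Matrix.toEuclideanCLM (𝕜 := 𝕜) M).le_opNorm _) 2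
    _ = C ^ 2 * ‖v‖ ^ 2 := by
        simp only [← Finset.mul_sum, PiLp.norm_sq_eq_of_L2, column]
        rw [Finset.sum_comm]

end BlockNorms

section Averaging

variable {ι R E : Type*} [Fintype ι]

theorem Matrix.sum_sum_smul_of_sum_col_eq_one [Semiring R] [AddCommMonoid E] [Module R E]
    {W : Matrix ι ι R} (hcol : ∀ j, ∑ i, W i j = 1) (v : ι → E) :
    ∑ i, ∑ j, W i j • v j = ∑ j, v j := by
  rw [Finset.sum_comm]
  simp only [← Finset.sum_smul, hcol, one_smul]

theorem Matrix.sum_smul_sub_const_of_sum_row_eq_zero {ι' : Type*} [Ring R] [AddCommGroup E]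
    [Module R E] {M : Matrix ι' ι R} {i : ι'} (hrow : ∑ j, M i j = 0) (v : ι → E) (c : E) :
    ∑ j, M i j • (v j - c) = ∑ j, M i j • v j := by
  simp only [smul_sub, Finset.sum_sub_distrib, ← Finset.sum_smul, hrow, zero_smul, sub_zero]

theorem Matrix.sum_smul_sub_mean_eq [AddCommGroup E] [Module ℝ E] {W : Matrix ι ι ℝ}
    (hrow : ∀ i, ∑ j, W i j = 1) (hcol : ∀ j, ∑ i, W i j = 1) (v : ι → E) (c : E) (i : ι) :
    ∑ j, W i j • v j - (Fintype.card ι : ℝ)⁻¹ • ∑ k, ∑ j, W k j • v j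
      = ∑ j, (W - (Fintype.card ι : ℝ)⁻¹ • Matrix.of fun _ _ => 1 : Matrix ι ι ℝ) i j
          • (v j - c) := by
  have : Nonempty ι := ⟨i⟩
  have hcard : (Fintype.card ι : ℝ) ≠ 0 := Nat.cast_ne_zero.mpr Fintype.card_ne_zero
  have hrow_centered :
      ∑ j, (W - (Fintype.card ι : ℝ)⁻¹ • Matrix.of fun _ _ => 1 : Matrix ι ι ℝ) i j = 0 := by
    simp [Finset.sum_sub_distrib, hrow, hcard]
  rw [Matrix.sum_smul_sub_const_of_sum_row_eq_zero hrow_centered,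
    Matrix.sum_sum_smul_of_sum_col_eq_one hcol]
  simp [sub_smul, Finset.sum_sub_distrib, Finset.smul_sum]

end Averaging

theorem consensus_error_recursion_general {n d : ℕ}
    (W : Matrix (Fin n) (Fin n) ℝ)
    (hW1 : W.mulVec (fun _ => (1 : ℝ)) = fun _ => 1)
    (hW2 : Wᵀ.mulVec (fun _ => (1 : ℝ)) = fun _ => 1)
    (J : Matrix (Fin n) (Fin n) ℝ) (hJ : J = Matrix.of fun _ _ => (1 : ℝ))
    (σW : ℝ)
    (hσ : σW = ‖Matrix.toEuclideanCLM (𝕜 := ℝ) (W - (n : ℝ)⁻¹ • J)‖)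
    (A : Matrix (Fin d) (Fin d) ℝ)
    (hA : ‖Matrix.toEuclideanCLM (𝕜 := ℝ) A‖ ≤ 1)
    (x y : ℕ → PiLp 2 (fun _ : Fin n => EuclideanSpace ℝ (Fin d)))
    -- Algorithm: x_{t+1} = (W ⊗ A)(x_t - y_t)
    (hdyn : ∀ t i, x (t + 1) i
      = ∑ j, W i j • (Matrix.toEuclideanCLM (𝕜 := ℝ) A) (x t j - y t j))
    (xbar ybar : ℕ → EuclideanSpace ℝ (Fin d))
    (hxbar : ∀ t, xbar t = (n : ℝ)⁻¹ • ∑ i, x t i)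
    (xdev ydev : ℕ → PiLp 2 (fun _ : Fin n => EuclideanSpace ℝ (Fin d)))
    (hxdev : ∀ t i, xdev t i = x t i - xbar t)
    (hydev : ∀ t i, ydev t i = y t i - ybar t) :
    ∀ t, ‖xdev (t + 1)‖ ≤ σW * ‖xdev t‖ + σW * ‖ydev t‖ := by
  intro t
  subst hσ
  set T := Matrix.toEuclideanCLM (𝕜 := ℝ) A
  have hrow : ∀ i, ∑ j, W i j = 1 := by simpa [Matrix.mulVec, dotProduct] using congrFun hW1
  have hcol : ∀ j, ∑ i, W i j = 1 := by simpa [Matrix.mulVec, dotProduct] using congrFun hW2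
  set Tdev := WithLp.toLp 2 fun j => T ((xdev t - ydev t) j)
  have hdev : xdev (t + 1) = WithLp.toLp 2 fun i => ∑ j, (W - (n : ℝ)⁻¹ • J) i j • Tdev j := by
    ext i : 1
    subst hJ
    have hmix := Matrix.sum_smul_sub_mean_eq hrow hcol (fun j => T (x t j - y t j))
      (T (xbar t - ybar t)) i
    rw [Fintype.card_fin] at hmix
    simp only [Tdev, hxdev, hdyn, hxbar (t + 1), hmix, PiLp.sub_apply, hydev, ← map_sub,
      sub_sub_sub_comm]
  calc ‖xdev (t + 1)‖
      ≤ ‖Matrix.toEuclideanCLM (𝕜 := ℝ) (W - (n : ℝ)⁻¹ • J)‖ * (‖T‖ * ‖xdev t - ydev t‖) := by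
        rw [hdev]
        exact (Matrix.norm_toLp_sum_smul_le _ _).trans (by gcongr; exact PiLp.norm_toLp_map_le T _)
    _ ≤ _ := by
        rw [← mul_add]
        gcongr
        exact (mul_le_of_le_one_left (norm_nonneg _) hA).trans (norm_sub_le _ _)

/-- consensus error recursion
`‖x_{t+1} - 1 ⊗ x̄_{t+1}‖ ≤ σ_W ‖x_t - 1 ⊗ x̄_t‖ + σ_W ‖y_t - 1 ⊗ ȳ_t‖`. -/
theorem consensus_error_recursion {n d : ℕ} (hn : 0 < n)
    (W : Matrix (Fin n) (Fin n) ℝ)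
    (hW1 : W.mulVec (fun _ => (1 : ℝ)) = fun _ => 1)
    (hW2 : Wᵀ.mulVec (fun _ => (1 : ℝ)) = fun _ => 1)
    (J : Matrix (Fin n) (Fin n) ℝ) (hJ : J = Matrix.of fun _ _ => (1 : ℝ))
    (σW : ℝ)
    (hσ : σW = ‖Matrix.toEuclideanCLM (𝕜 := ℝ) (W - (n : ℝ)⁻¹ • J)‖)
    (hσlt : σW < 1)
    (A : Matrix (Fin d) (Fin d) ℝ)
    (hA : ‖Matrix.toEuclideanCLM (𝕜 := ℝ) A‖ ≤ 1)
    (x y : ℕ → PiLp 2 (fun _ : Fin n => EuclideanSpace ℝ (Fin d)))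
    -- Algorithm: x_{t+1} = (W ⊗ A)(x_t - y_t)
    (hdyn : ∀ t i, x (t + 1) i
      = ∑ j, W i j • (Matrix.toEuclideanCLM (𝕜 := ℝ) A) (x t j - y t j))
    (xbar ybar : ℕ → EuclideanSpace ℝ (Fin d))
    (hxbar : ∀ t, xbar t = (n : ℝ)⁻¹ • ∑ i, x t i)
    (hybar : ∀ t, ybar t = (n : ℝ)⁻¹ • ∑ i, y t i)
    (xdev ydev : ℕ → PiLp 2 (fun _ : Fin n => EuclideanSpace ℝ (Fin d)))
    (hxdev : ∀ t i, xdev t i = x t i - xbar t)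
    (hydev : ∀ t i, ydev t i = y t i - ybar t) :
    ∀ t, ‖xdev (t + 1)‖ ≤ σW * ‖xdev t‖ + σW * ‖ydev t‖ :=
  consensus_error_recursion_general W hW1 hW2 J hJ σW hσ A hA x y hdyn xbar ybar hxbar xdev ydev
    hxdev hydev
end
end

section
/- Averaged y-bound: if (1ᵀ ⊗ I) y_t = α (1ᵀ ⊗ I) g_t(x_t), each ∇f_{i,t} is L_g-Lipschitz, Σᵢ ∇f_{i,t}(x*_t) = 0, and ȳ_t = (1/n)(1ᵀ ⊗ I)y_t, then ‖1 ⊗ ȳ_t‖ ≤ α L_g ‖x_t - 1 ⊗ x*_t‖. -/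
open scoped BigOperators

noncomputable section

/-- averaged `y` bound `‖1 ⊗ ȳ_t‖ ≤ α L_g ‖x_t - 1 ⊗ x*_t‖`. -/
theorem averaged_y_bound {n d : ℕ} (hn : 0 < n)
    (Lg α : ℝ) (hLg : 0 < Lg) (hα : 0 < α)
    (f : Fin n → EuclideanSpace ℝ (Fin d) → ℝ)
    (hLip : ∀ i, LipschitzWith (Real.toNNReal Lg) (gradient (f i)))
    (xstar : EuclideanSpace ℝ (Fin d))
    -- first-order optimality: Σᵢ ∇f_{i,t}(x*_t) = 0
    (hfoc : ∑ i, gradient (f i) xstar = 0)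
    (x y : PiLp 2 (fun _ : Fin n => EuclideanSpace ℝ (Fin d)))
    -- conservation: (1ᵀ ⊗ I) y_t = α (1ᵀ ⊗ I) g_t(x_t)
    (hcons : ∑ i, y i = α • ∑ i, gradient (f i) (x i))
    (ybar : EuclideanSpace ℝ (Fin d)) (hybar : ybar = (n : ℝ)⁻¹ • ∑ i, y i)
    (onesybar xdevstar : PiLp 2 (fun _ : Fin n => EuclideanSpace ℝ (Fin d)))
    (honesybar : ∀ i, onesybar i = ybar)
    (hxdevstar : ∀ i, xdevstar i = x i - xstar) :
    ‖onesybar‖ ≤ α * Lg * ‖xdevstar‖ := by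
  have hn0 : (0 : ℝ) < n := by exact_mod_cast hn
  set S : ℝ := ∑ i, ‖x i - xstar‖ with hS
  -- sum of y rewritten as sum of gradient differences
  have hy : ∑ i, y i = α • ∑ i, (gradient (f i) (x i) - gradient (f i) xstar) := by
    rw [Finset.sum_sub_distrib, hfoc, sub_zero]; exact hcons
  -- bound on ‖ybar‖
  have hgrad : ∀ i : Fin n, ‖gradient (f i) (x i) - gradient (f i) xstar‖ ≤ Lg * ‖x i - xstar‖ := by
    intro i
    have := (hLip i).dist_le_mul (x i) xstar
    simpa [dist_eq_norm, Real.coe_toNNReal _ hLg.le] using this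
  have hsumg : ‖∑ i, (gradient (f i) (x i) - gradient (f i) xstar)‖ ≤ Lg * S := by
    calc ‖∑ i, (gradient (f i) (x i) - gradient (f i) xstar)‖
        ≤ ∑ i, ‖gradient (f i) (x i) - gradient (f i) xstar‖ := norm_sum_le _ _
      _ ≤ ∑ i, Lg * ‖x i - xstar‖ := Finset.sum_le_sum fun i _ => hgrad i
      _ = Lg * S := by rw [hS, Finset.mul_sum]
  have hybarle : ‖ybar‖ ≤ (n : ℝ)⁻¹ * (α * (Lg * S)) := by
    rw [hybar, hy, norm_smul, norm_smul]
    have : ‖(n : ℝ)⁻¹‖ = (n : ℝ)⁻¹ := by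
      simp [Real.norm_eq_abs, abs_of_nonneg (inv_nonneg.mpr hn0.le)]
    rw [this, Real.norm_eq_abs, abs_of_pos hα]
    exact mul_le_mul_of_nonneg_left (mul_le_mul_of_nonneg_left hsumg hα.le)
      (inv_nonneg.mpr hn0.le)
  -- norms of the stacked vectors
  have hones : ‖onesybar‖ = Real.sqrt n * ‖ybar‖ := by
    have h2 : ‖onesybar‖ ^ 2 = ∑ i : Fin n, ‖onesybar i‖ ^ 2 :=
      PiLp.norm_sq_eq_of_L2 _ onesybar
    have : ‖onesybar‖ ^ 2 = (n : ℝ) * ‖ybar‖ ^ 2 := by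
      rw [h2]
      simp only [honesybar, Finset.sum_const, Finset.card_univ, Fintype.card_fin, nsmul_eq_mul]
    have := congrArg Real.sqrt this
    rwa [Real.sqrt_sq (norm_nonneg _), Real.sqrt_mul (by positivity),
      Real.sqrt_sq (norm_nonneg _)] at this
  have hxdev2 : ‖xdevstar‖ ^ 2 = ∑ i : Fin n, ‖x i - xstar‖ ^ 2 := by
    rw [PiLp.norm_sq_eq_of_L2]
    exact Finset.sum_congr rfl fun i _ => by rw [hxdevstar]
  -- Cauchy–Schwarz: S ≤ √n ‖xdevstar‖
  have hCS : S ^ 2 ≤ (n : ℝ) * ‖xdevstar‖ ^ 2 := by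
    rw [hxdev2, hS]
    have := sq_sum_le_card_mul_sum_sq (s := (Finset.univ : Finset (Fin n)))
      (f := fun i => ‖x i - xstar‖)
    simpa using this
  have hSle : S ≤ Real.sqrt n * ‖xdevstar‖ := by
    have hSnn : 0 ≤ S := Finset.sum_nonneg fun i _ => norm_nonneg _
    have : S ≤ Real.sqrt ((n : ℝ) * ‖xdevstar‖ ^ 2) := by
      rw [show S = Real.sqrt (S ^ 2) from (Real.sqrt_sq hSnn).symm]
      exact Real.sqrt_le_sqrt hCS
    rwa [Real.sqrt_mul hn0.le, Real.sqrt_sq (norm_nonneg _)] at this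
  -- finish
  have hsq : Real.sqrt n * Real.sqrt n = (n : ℝ) := Real.mul_self_sqrt hn0.le
  calc ‖onesybar‖ = Real.sqrt n * ‖ybar‖ := hones
    _ ≤ Real.sqrt n * ((n : ℝ)⁻¹ * (α * (Lg * S))) :=
        mul_le_mul_of_nonneg_left hybarle (Real.sqrt_nonneg _)
    _ ≤ Real.sqrt n * ((n : ℝ)⁻¹ * (α * (Lg * (Real.sqrt n * ‖xdevstar‖)))) := by
        have : α * (Lg * S) ≤ α * (Lg * (Real.sqrt n * ‖xdevstar‖)) := by
          apply mul_le_mul_of_nonneg_left (mul_le_mul_of_nonneg_left hSle hLg.le) hα.le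
        exact mul_le_mul_of_nonneg_left (mul_le_mul_of_nonneg_left this
          (inv_nonneg.mpr hn0.le)) (Real.sqrt_nonneg _)
    _ = α * Lg * ‖xdevstar‖ := by
        have h : Real.sqrt n * ((n : ℝ)⁻¹ * (α * (Lg * (Real.sqrt n * ‖xdevstar‖)))) =
            (Real.sqrt n * Real.sqrt n) * (n : ℝ)⁻¹ * (α * Lg * ‖xdevstar‖) := by ring
        rw [h, hsq, mul_inv_cancel₀ hn0.ne', one_mul]
end
end
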